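/- Atiyah's functional τ(T) := Tr(M_χ ∘ T ∘ M_χ), defined on nonnegative Γ-invariant bounded operators T on L²(M̂), where χ is the characteristic function of a measurable fundamental domain for a free proper measure-preserving action of the countable group Γ, is independent of the choice of fundamental domain and is a tracial functional: τ(S*S) = τ(SS*) for all Γ-invariant bounded S. -/

import Mathlib

/-!
Write `‖A‖²_HS = ∑ᵢ ‖A fᵢ‖²` for the basis `f`; for a self-adjoint cut-off `P`,
`Tr (P C* C P) = ‖C P‖²_HS`. Since the translates of a fundamental domain tile `M̂`, the cut-off
`Q = M_χ` satisfies `∑_g ‖Q U_g x‖² = ‖x‖²`, so `‖C P‖²_HS = ∑_g ‖Q U_g C P‖²_HS`. Replacing each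
term by the Hilbert–Schmidt norm of its adjoint `P U_g⁻¹ C* Q` (using `C U_g = U_g C` and
`U_g* = U_g⁻¹`) and reindexing `g ↦ g⁻¹` gives `‖C* Q‖²_HS = Tr (Q C C* Q)`. With `P = Q` this is
traciality; with `C = √T`, which commutes with every `U_g`, and two fundamental domains it is
independence of the domain.
-/

open MeasureTheory ContinuousLinearMap
open scoped ENNReal

/-- The usual trace on `B(ℋ)` (for nonnegative operators), via an orthonormal basis. -/
noncomputable def basisTR {H : Type*} [NormedAddCommGroup H] [InnerProductSpace ℂ H]
    [CompleteSpace H] (f : HilbertBasis ℕ ℂ H) (T : H →L[ℂ] H) : ℝ≥0∞ :=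
  ∑' i : ℕ, ENNReal.ofReal ((inner ℂ (T (f i)) (f i) : ℂ).re)

namespace HilbertBasis

variable {𝕜 ι κ H K : Type*} [RCLike 𝕜]
  [NormedAddCommGroup H] [InnerProductSpace 𝕜 H] [NormedAddCommGroup K] [InnerProductSpace 𝕜 K]

theorem tsum_enorm_inner_sq (b : HilbertBasis ι 𝕜 H) (x : H) :
    ∑' i, ‖(inner 𝕜 (b i) x : 𝕜)‖ₑ ^ 2 = ‖x‖ₑ ^ 2 := by
  have h := lp.hasSum_norm (p := 2) (by norm_num) (b.repr x)
  simp only [ENNReal.toReal_ofNat, Real.rpow_two, b.repr_apply_apply,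
    LinearIsometryEquiv.norm_map] at h
  simp only [← ofReal_norm, ← ENNReal.ofReal_pow (norm_nonneg _)]
  rw [← ENNReal.ofReal_tsum_of_nonneg (fun _ => by positivity) h.summable, h.tsum_eq]

noncomputable def hsNormSq (b : HilbertBasis ι 𝕜 H) (A : H →L[𝕜] K) : ℝ≥0∞ :=
  ∑' i, ‖A (b i)‖ₑ ^ 2

theorem hsNormSq_eq_tsum_hsNormSq_comp {Γ : Type*} (b : HilbertBasis ι 𝕜 H)
    (A : H →L[𝕜] K) (V : Γ → K →L[𝕜] K) (hV : ∀ y, ∑' g, ‖V g y‖ₑ ^ 2 = ‖y‖ₑ ^ 2) :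
    b.hsNormSq A = ∑' g, b.hsNormSq (V g ∘L A) := by
  simp only [hsNormSq]
  rw [ENNReal.tsum_comm]
  exact tsum_congr fun i => (hV _).symm

variable [CompleteSpace H] [CompleteSpace K]

theorem hsNormSq_adjoint (b : HilbertBasis ι 𝕜 H) (b' : HilbertBasis κ 𝕜 K)
    (A : H →L[𝕜] K) :
    b'.hsNormSq (adjoint A) = b.hsNormSq A := calc
  b'.hsNormSq (adjoint A) = ∑' j, ∑' i, ‖(inner 𝕜 (b i) (adjoint A (b' j)) : 𝕜)‖ₑ ^ 2 :=
    tsum_congr fun j => (b.tsum_enorm_inner_sq _).symm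
  _ = ∑' i, ∑' j, ‖(inner 𝕜 (b' j) (A (b i)) : 𝕜)‖ₑ ^ 2 := by
    rw [ENNReal.tsum_comm]
    refine tsum_congr fun i => tsum_congr fun j => ?_
    rw [adjoint_inner_right, ← ofReal_norm, ← ofReal_norm, norm_inner_symm]
  _ = b.hsNormSq A := tsum_congr fun i => b'.tsum_enorm_inner_sq _

end HilbertBasis

section Exchange

variable {𝕜 ι H Γ : Type*} [RCLike 𝕜] [NormedAddCommGroup H] [InnerProductSpace 𝕜 H]
  [CompleteSpace H] [Group Γ]

theorem adjoint_linearIsometryEquiv_eq_of_inv (U : Γ → H ≃ₗᵢ[𝕜] H)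
    (hU : ∀ g x, U g⁻¹ (U g x) = x) (g : Γ) : adjoint (U g : H →L[𝕜] H) = U g⁻¹ := by
  ext x
  rw [LinearIsometryEquiv.adjoint_eq_symm]
  show (U g).symm x = U g⁻¹ x
  rw [LinearIsometryEquiv.symm_apply_eq]
  simpa using (hU g⁻¹ x).symm

theorem hsNormSq_comp_eq_hsNormSq_adjoint_comp (b : HilbertBasis ι 𝕜 H)
    (U : Γ → H ≃ₗᵢ[𝕜] H) (hU : ∀ g x, U g⁻¹ (U g x) = x) {P Q : H →L[𝕜] H} (hP : IsSelfAdjoint P)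
    (hQ : IsSelfAdjoint Q) (hPU : ∀ x, ∑' g, ‖P (U g x)‖ₑ ^ 2 = ‖x‖ₑ ^ 2)
    (hQU : ∀ x, ∑' g, ‖Q (U g x)‖ₑ ^ 2 = ‖x‖ₑ ^ 2) {C : H →L[𝕜] H}
    (hC : ∀ g x, C (U g x) = U g (C x)) :
    b.hsNormSq (C ∘L P) = b.hsNormSq (adjoint C ∘L Q) := by
  let u : Γ → H →L[𝕜] H := fun g => U g
  have hu : ∀ g, adjoint (u g) = u g⁻¹ := adjoint_linearIsometryEquiv_eq_of_inv U hU
  have hCadj : ∀ g, adjoint C ∘L u g⁻¹ = u g⁻¹ ∘L adjoint C := fun g => by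
    have hCu : C ∘L u g = u g ∘L C := ContinuousLinearMap.ext (hC g)
    simpa only [adjoint_comp, hu] using congr(adjoint $hCu).symm
  calc b.hsNormSq (C ∘L P)
      = ∑' g, b.hsNormSq ((Q ∘L u g) ∘L C ∘L P) :=
        b.hsNormSq_eq_tsum_hsNormSq_comp _ (fun g => Q ∘L u g) hQU
    _ = ∑' g, b.hsNormSq ((P ∘L u g⁻¹) ∘L adjoint C ∘L Q) := by
      refine tsum_congr fun g => ?_
      rw [← b.hsNormSq_adjoint b]
      simp only [adjoint_comp, hu, hP.adjoint_eq, hQ.adjoint_eq, comp_assoc, hCadj]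
    _ = ∑' g, b.hsNormSq ((P ∘L u g) ∘L adjoint C ∘L Q) :=
      (Equiv.inv Γ).tsum_eq fun g => b.hsNormSq ((P ∘L u g) ∘L adjoint C ∘L Q)
    _ = b.hsNormSq (adjoint C ∘L Q) :=
      (b.hsNormSq_eq_tsum_hsNormSq_comp _ (fun g => P ∘L u g) hPU).symm

end Exchange

section Trace

variable {H : Type*} [NormedAddCommGroup H] [InnerProductSpace ℂ H] [CompleteSpace H]

theorem basisTR_conj_adjoint_comp_self (f : HilbertBasis ℕ ℂ H) {P : H →L[ℂ] H}
    (hP : IsSelfAdjoint P) (C : H →L[ℂ] H) :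
    basisTR f (P ∘L (adjoint C ∘L C) ∘L P) = f.hsNormSq (C ∘L P) := by
  refine tsum_congr fun i => ?_
  have h : (inner ℂ ((P ∘L (adjoint C ∘L C) ∘L P) (f i)) (f i) : ℂ) = ‖C (P (f i))‖ ^ 2 := by
    rw [comp_apply, ← adjoint_inner_right, hP.adjoint_eq, comp_apply, comp_apply,
      adjoint_inner_left, inner_self_eq_norm_sq_to_K]
    rfl
  rw [h, ← Complex.ofReal_pow, Complex.ofReal_re, ENNReal.ofReal_pow (norm_nonneg _),
    ofReal_norm]
  rfl

theorem basisTR_conj_adjoint_comp_self_eq_conj_comp_adjoint {Γ : Type*} [Group Γ]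
    (f : HilbertBasis ℕ ℂ H) (U : Γ → H ≃ₗᵢ[ℂ] H) (hU : ∀ g x, U g⁻¹ (U g x) = x) {P Q : H →L[ℂ] H}
    (hP : IsSelfAdjoint P) (hQ : IsSelfAdjoint Q)
    (hPU : ∀ x, ∑' g, ‖P (U g x)‖ₑ ^ 2 = ‖x‖ₑ ^ 2)
    (hQU : ∀ x, ∑' g, ‖Q (U g x)‖ₑ ^ 2 = ‖x‖ₑ ^ 2) {C : H →L[ℂ] H}
    (hC : ∀ g x, C (U g x) = U g (C x)) :
    basisTR f (P ∘L (adjoint C ∘L C) ∘L P) = basisTR f (Q ∘L (C ∘L adjoint C) ∘L Q) := by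
  calc basisTR f (P ∘L (adjoint C ∘L C) ∘L P) = f.hsNormSq (C ∘L P) :=
        basisTR_conj_adjoint_comp_self f hP C
    _ = f.hsNormSq (adjoint C ∘L Q) :=
        hsNormSq_comp_eq_hsNormSq_adjoint_comp f U hU hP hQ hPU hQU hC
    _ = basisTR f (Q ∘L (C ∘L adjoint C) ∘L Q) := by
        simpa only [adjoint_adjoint] using (basisTR_conj_adjoint_comp_self f hQ (adjoint C)).symm

theorem ContinuousLinearMap.IsPositive.exists_isSelfAdjoint_sq_eq_commute {T : H →L[ℂ] H}
    (hT : T.IsPositive) :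
    ∃ R : H →L[ℂ] H, IsSelfAdjoint R ∧ R ∘L R = T ∧ ∀ B, Commute T B → Commute R B := by
  have hT0 : 0 ≤ T := (nonneg_iff_isPositive T).mpr hT
  exact ⟨CFC.sqrt T, (CFC.sqrt_nonneg T).isSelfAdjoint, CFC.sqrt_mul_sqrt_self T hT0,
    fun B hB => hB.cfcₙ_nnreal NNReal.sqrt⟩

end Trace

theorem tsum_indicator_one_comp_eq_one {ι α : Type*} {s : Set α} {x : ι → α}
    (h : ∃! i, x i ∈ s) : ∑' i, s.indicator (1 : α → ℝ≥0∞) (x i) = 1 := by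
  obtain ⟨i₀, hi₀, huniq⟩ := h
  rw [tsum_eq_single i₀ fun i hi => Set.indicator_of_notMem (fun hmem => hi (huniq i hmem)) _,
    Set.indicator_of_mem hi₀, Pi.one_apply]

section Action

variable {Γ M : Type*} [Group Γ]

theorem action_inv_apply (a : Γ → M → M) (hone : ∀ m, a 1 m = m)
    (hmul : ∀ g h m, a (g * h) m = a h (a g m)) (g : Γ) (m : M) : a g⁻¹ (a g m) = m := by
  rw [← hmul, mul_inv_cancel, hone]

theorem action_apply_inv (a : Γ → M → M) (hone : ∀ m, a 1 m = m)
    (hmul : ∀ g h m, a (g * h) m = a h (a g m)) (g : Γ) (m : M) : a g (a g⁻¹ m) = m := by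
  rw [← hmul, inv_mul_cancel, hone]

variable [MeasurableSpace M] {μ : Measure M}

theorem measurableEmbedding_action (a : Γ → M → M) (hmeas : ∀ g, Measurable (a g))
    (hone : ∀ m, a 1 m = m) (hmul : ∀ g h m, a (g * h) m = a h (a g m)) (g : Γ) :
    MeasurableEmbedding (a g) :=
  MeasurableEquiv.measurableEmbedding
    { toFun := a g
      invFun := a g⁻¹
      left_inv := action_inv_apply a hone hmul g
      right_inv := action_apply_inv a hone hmul g
      measurable_toFun := hmeas g
      measurable_invFun := hmeas g⁻¹ }

theorem inv_translate_apply_translate (a : Γ → M → M)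
    (hmp : ∀ g, MeasurePreserving (a g) μ μ)
    (hone : ∀ m, a 1 m = m) (hmul : ∀ g h m, a (g * h) m = a h (a g m))
    (U : Γ → Lp ℂ 2 μ ≃ₗᵢ[ℂ] Lp ℂ 2 μ)
    (hU : ∀ g η, (U g η : M → ℂ) =ᵐ[μ] fun m => η (a g m)) (g : Γ) (η : Lp ℂ 2 μ) :
    U g⁻¹ (U g η) = η := by
  refine Lp.ext ((hU g⁻¹ _).trans ?_)
  filter_upwards [(hmp g⁻¹).quasiMeasurePreserving.ae_eq_comp (hU g η)] with m hm
  simpa only [Function.comp_apply, action_apply_inv a hone hmul] using hm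

theorem MeasureTheory.Lp.enorm_sq_eq_lintegral {E : Type*} [NormedAddCommGroup E]
    (η : Lp E 2 μ) :
    ‖η‖ₑ ^ 2 = ∫⁻ m, ‖η m‖ₑ ^ 2 ∂μ := by
  have h := eLpNorm_nnreal_pow_eq_lintegral (f := η) (μ := μ) (p := 2) two_ne_zero
  simp only [NNReal.coe_ofNat, ENNReal.rpow_two, ENNReal.coe_ofNat] at h
  rw [Lp.enorm_def, h]

theorem isSelfAdjoint_of_indicator_mul {V : Set M} {P : Lp ℂ 2 μ →L[ℂ] Lp ℂ 2 μ}
    (hP : ∀ η, (P η : M → ℂ) =ᵐ[μ] fun m => V.indicator (fun _ => (1 : ℂ)) m * η m) :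
    IsSelfAdjoint P := by
  refine isSelfAdjoint_iff'.mpr ((eq_adjoint_iff P P).mpr fun x y => ?_).symm
  rw [L2.inner_def, L2.inner_def]
  refine integral_congr_ae ?_
  filter_upwards [hP x, hP y] with m hx hy
  by_cases hm : m ∈ V <;> simp [hx, hy, hm]

theorem enorm_sq_indicator_mul_translate (a : Γ → M → M)
    (hmp : ∀ g, MeasurePreserving (a g) μ μ)
    (hone : ∀ m, a 1 m = m) (hmul : ∀ g h m, a (g * h) m = a h (a g m))
    (U : Γ → Lp ℂ 2 μ ≃ₗᵢ[ℂ] Lp ℂ 2 μ)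
    (hU : ∀ g η, (U g η : M → ℂ) =ᵐ[μ] fun m => η (a g m)) {V : Set M}
    {P : Lp ℂ 2 μ →L[ℂ] Lp ℂ 2 μ}
    (hP : ∀ η, (P η : M → ℂ) =ᵐ[μ] fun m => V.indicator (fun _ => (1 : ℂ)) m * η m)
    (g : Γ) (ζ : Lp ℂ 2 μ) :
    ‖P (U g ζ)‖ₑ ^ 2 = ∫⁻ m, V.indicator 1 (a g⁻¹ m) * ‖ζ m‖ₑ ^ 2 ∂μ := calc
  ‖P (U g ζ)‖ₑ ^ 2 = ∫⁻ m, V.indicator 1 (a g⁻¹ (a g m)) * ‖ζ (a g m)‖ₑ ^ 2 ∂μ := by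
    rw [Lp.enorm_sq_eq_lintegral]
    refine lintegral_congr_ae ?_
    filter_upwards [hP (U g ζ), hU g ζ] with m hPm hUm
    rw [hPm, hUm, action_inv_apply a hone hmul]
    by_cases hm : m ∈ V <;> simp [hm]
  _ = ∫⁻ m, V.indicator 1 (a g⁻¹ m) * ‖ζ m‖ₑ ^ 2 ∂μ :=
    (hmp g).lintegral_comp_emb
      (measurableEmbedding_action a (fun g => (hmp g).measurable) hone hmul g)
      fun m => V.indicator 1 (a g⁻¹ m) * ‖ζ m‖ₑ ^ 2

theorem tsum_enorm_sq_indicator_mul_translate [Countable Γ] (a : Γ → M → M)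
    (hmp : ∀ g, MeasurePreserving (a g) μ μ)
    (hone : ∀ m, a 1 m = m) (hmul : ∀ g h m, a (g * h) m = a h (a g m))
    (U : Γ → Lp ℂ 2 μ ≃ₗᵢ[ℂ] Lp ℂ 2 μ)
    (hU : ∀ g η, (U g η : M → ℂ) =ᵐ[μ] fun m => η (a g m))
    {V : Set M} (hV : MeasurableSet V) (hfund : ∀ᵐ m ∂μ, ∃! g, a g m ∈ V)
    {P : Lp ℂ 2 μ →L[ℂ] Lp ℂ 2 μ}
    (hP : ∀ η, (P η : M → ℂ) =ᵐ[μ] fun m => V.indicator (fun _ => (1 : ℂ)) m * η m)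
    (ζ : Lp ℂ 2 μ) :
    ∑' g, ‖P (U g ζ)‖ₑ ^ 2 = ‖ζ‖ₑ ^ 2 := calc
  ∑' g, ‖P (U g ζ)‖ₑ ^ 2 = ∑' g, ∫⁻ m, V.indicator 1 (a g⁻¹ m) * ‖ζ m‖ₑ ^ 2 ∂μ :=
    tsum_congr (enorm_sq_indicator_mul_translate a hmp hone hmul U hU hP · ζ)
  _ = ∫⁻ m, ∑' g, V.indicator 1 (a g⁻¹ m) * ‖ζ m‖ₑ ^ 2 ∂μ := by
    refine (lintegral_tsum fun g => ?_).symm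
    exact ((measurable_one.indicator hV).comp (hmp g⁻¹).measurable).aemeasurable.mul
      ((Lp.aestronglyMeasurable ζ).enorm.pow_const 2)
  _ = ∫⁻ m, (∑' g, V.indicator 1 (a g⁻¹ m)) * ‖ζ m‖ₑ ^ 2 ∂μ := by
    simp only [ENNReal.tsum_mul_right]
  _ = ∫⁻ m, ‖ζ m‖ₑ ^ 2 ∂μ := by
    refine lintegral_congr_ae ?_
    filter_upwards [hfund] with m hm
    have hinv := (Equiv.inv Γ).tsum_eq fun g => V.indicator (1 : M → ℝ≥0∞) (a g m)
    simp only [Equiv.inv_apply] at hinv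
    rw [hinv, tsum_indicator_one_comp_eq_one hm, one_mul]
  _ = ‖ζ‖ₑ ^ 2 := (Lp.enorm_sq_eq_lintegral ζ).symm

end Action

theorem atiyah_trace_wellDefined_tracial_general {Γ : Type*} [Group Γ] [Countable Γ]
    {M : Type*} [MeasurableSpace M] (μ : Measure M)
    (a : Γ → M → M)
    (hmp : ∀ g : Γ, MeasurePreserving (a g) μ μ)
    (hone : ∀ m : M, a 1 m = m)
    (hmulact : ∀ (g h : Γ) (m : M), a (g * h) m = a h (a g m))
    -- two measurable fundamental domains
    (Uf Uf' : Set M) (hUf : MeasurableSet Uf) (hUf' : MeasurableSet Uf')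
    (hfund : ∀ᵐ m ∂μ, ∃! g : Γ, a g m ∈ Uf)
    (hfund' : ∀ᵐ m ∂μ, ∃! g : Γ, a g m ∈ Uf')
    -- the unitaries induced by the action
    (UL : Γ → (Lp ℂ 2 μ ≃ₗᵢ[ℂ] Lp ℂ 2 μ))
    (hUL : ∀ (g : Γ) (η : Lp ℂ 2 μ),
      ((UL g η : Lp ℂ 2 μ) : M → ℂ) =ᵐ[μ] fun m => (η : M → ℂ) (a g m))
    -- multiplication by the two characteristic functions
    (Mchi Mchi' : Lp ℂ 2 μ →L[ℂ] Lp ℂ 2 μ)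
    (hMchi : ∀ η : Lp ℂ 2 μ,
      ((Mchi η : Lp ℂ 2 μ) : M → ℂ) =ᵐ[μ]
        fun m => (Set.indicator Uf (fun _ => (1 : ℂ)) m) * (η : M → ℂ) m)
    (hMchi' : ∀ η : Lp ℂ 2 μ,
      ((Mchi' η : Lp ℂ 2 μ) : M → ℂ) =ᵐ[μ]
        fun m => (Set.indicator Uf' (fun _ => (1 : ℂ)) m) * (η : M → ℂ) m)
    -- an orthonormal basis of L²(M̂), computing the usual trace Tr
    (f : HilbertBasis ℕ ℂ (Lp ℂ 2 μ)) :
    (∀ T : Lp ℂ 2 μ →L[ℂ] Lp ℂ 2 μ,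
        (∀ (g : Γ) (η : Lp ℂ 2 μ), T (UL g η) = UL g (T η)) →
        T.IsPositive →
        basisTR f (Mchi ∘L T ∘L Mchi) = basisTR f (Mchi' ∘L T ∘L Mchi')) ∧
    (∀ S : Lp ℂ 2 μ →L[ℂ] Lp ℂ 2 μ,
        (∀ (g : Γ) (η : Lp ℂ 2 μ), S (UL g η) = UL g (S η)) →
        basisTR f (Mchi ∘L (ContinuousLinearMap.adjoint S ∘L S) ∘L Mchi) =
          basisTR f (Mchi ∘L (S ∘L ContinuousLinearMap.adjoint S) ∘L Mchi)) := by
  have hinv := inv_translate_apply_translate a hmp hone hmulact UL hUL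
  have hP := isSelfAdjoint_of_indicator_mul hMchi
  have hP' := isSelfAdjoint_of_indicator_mul hMchi'
  have hPU := tsum_enorm_sq_indicator_mul_translate a hmp hone hmulact UL hUL hUf hfund hMchi
  have hPU' := tsum_enorm_sq_indicator_mul_translate a hmp hone hmulact UL hUL hUf' hfund' hMchi'
  refine ⟨fun T hT hTpos => ?_, fun S hS =>
    basisTR_conj_adjoint_comp_self_eq_conj_comp_adjoint f UL hinv hP hP hPU hPU hS⟩
  obtain ⟨R, hR, hRR, hRcomm⟩ := hTpos.exists_isSelfAdjoint_sq_eq_commute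
  have hRU : ∀ g η, R (UL g η) = UL g (R η) := fun g η =>
    congr($((hRcomm _ (ContinuousLinearMap.ext (hT g) :
      T * (UL g : Lp ℂ 2 μ →L[ℂ] Lp ℂ 2 μ) = UL g * T)).eq) η)
  have h := basisTR_conj_adjoint_comp_self_eq_conj_comp_adjoint f UL hinv hP hP' hPU hPU' hRU
  rwa [hR.adjoint_eq, hRR] at h

/-- Atiyah's functional `τ(T) = Tr(M_χ ∘ T ∘ M_χ)`, defined on
nonnegative `Γ`-invariant bounded operators on `L²(M̂)` (`χ` the characteristic function
of a measurable fundamental domain for a free measure-preserving action of the countable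
group `Γ`), is independent of the choice of fundamental domain, and is tracial:
`τ(S*S) = τ(SS*)` for every `Γ`-invariant bounded `S`. -/
theorem atiyah_trace_wellDefined_tracial {Γ : Type*} [Group Γ] [Countable Γ]
    {M : Type*} [MeasurableSpace M] (μ : Measure M) [SigmaFinite μ]
    (a : Γ → M → M)
    (hmp : ∀ g : Γ, MeasurePreserving (a g) μ μ)
    (hone : ∀ m : M, a 1 m = m)
    (hmulact : ∀ (g h : Γ) (m : M), a (g * h) m = a h (a g m))
    (hfree : ∀ g : Γ, g ≠ 1 → ∀ m, a g m ≠ m)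
    -- two measurable fundamental domains
    (Uf Uf' : Set M) (hUf : MeasurableSet Uf) (hUf' : MeasurableSet Uf')
    (hfund : ∀ᵐ m ∂μ, ∃! g : Γ, a g m ∈ Uf)
    (hfund' : ∀ᵐ m ∂μ, ∃! g : Γ, a g m ∈ Uf')
    -- the unitaries induced by the action
    (UL : Γ → (Lp ℂ 2 μ ≃ₗᵢ[ℂ] Lp ℂ 2 μ))
    (hUL : ∀ (g : Γ) (η : Lp ℂ 2 μ),
      ((UL g η : Lp ℂ 2 μ) : M → ℂ) =ᵐ[μ] fun m => (η : M → ℂ) (a g m))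
    -- multiplication by the two characteristic functions
    (Mchi Mchi' : Lp ℂ 2 μ →L[ℂ] Lp ℂ 2 μ)
    (hMchi : ∀ η : Lp ℂ 2 μ,
      ((Mchi η : Lp ℂ 2 μ) : M → ℂ) =ᵐ[μ]
        fun m => (Set.indicator Uf (fun _ => (1 : ℂ)) m) * (η : M → ℂ) m)
    (hMchi' : ∀ η : Lp ℂ 2 μ,
      ((Mchi' η : Lp ℂ 2 μ) : M → ℂ) =ᵐ[μ]
        fun m => (Set.indicator Uf' (fun _ => (1 : ℂ)) m) * (η : M → ℂ) m)
    -- an orthonormal basis of L²(M̂), computing the usual trace Tr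
    (f : HilbertBasis ℕ ℂ (Lp ℂ 2 μ)) :
    (∀ T : Lp ℂ 2 μ →L[ℂ] Lp ℂ 2 μ,
        (∀ (g : Γ) (η : Lp ℂ 2 μ), T (UL g η) = UL g (T η)) →
        T.IsPositive →
        basisTR f (Mchi ∘L T ∘L Mchi) = basisTR f (Mchi' ∘L T ∘L Mchi')) ∧
    (∀ S : Lp ℂ 2 μ →L[ℂ] Lp ℂ 2 μ,
        (∀ (g : Γ) (η : Lp ℂ 2 μ), S (UL g η) = UL g (S η)) →
        basisTR f (Mchi ∘L (ContinuousLinearMap.adjoint S ∘L S) ∘L Mchi) =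
          basisTR f (Mchi ∘L (S ∘L ContinuousLinearMap.adjoint S) ∘L Mchi)) :=
  atiyah_trace_wellDefined_tracial_general μ a hmp hone hmulact Uf Uf' hUf hUf' hfund hfund' UL hUL
    Mchi Mchi' hMchi hMchi' f
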